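/- arXiv:1712.05753 — 2 statements merged into one kernel-verified Lean document; each statement's English description precedes it below -/
import Mathlib

section
/- Let U, V : ℝ³ → ℂ be measurable functions whose Fourier transforms satisfy |Û(ξ)| ≤ M_U e^{−|ξ|} |ξ|^{−2} and |V̂(ξ)| ≤ M_V e^{−|ξ|} |ξ|^{−2} for all ξ ≠ 0. Then there is an absolute constant c > 0 such that for all ξ ≠ 0, |(Û ∗ V̂)(ξ)| ≤ c · M_U · M_V · e^{−|ξ|} / |ξ|. -/
/-!
The hypotheses bound the integrand by `M_U M_V e^{-|ξ-η|-|η|} |ξ-η|^{-p} |η|^{-p}`, and the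
triangle inequality `|ξ| ≤ |ξ-η| + |η|` pulls `e^{-|ξ|}` out of the integral. For the remaining
kernel put `s = |ξ|/2`: where `|η| ≤ s` the factor `|ξ-η|^{-p}` is at most `s^{-p}`, where
`|ξ-η| ≤ s` symmetrically, and where both exceed `s` we use `ab ≤ a² + b²`. So the kernel is
dominated by `G(|ξ-η|) + G(|η|)` for a radial `G` (`convMajorant p s`), and in polar coordinates
`∫ G(|η|) dη ≍ s^{n-2p}` as long as `n/2 < p < n`; for `n = 3`, `p = 2` this is `|ξ|^{-1}`.
-/

open MeasureTheory Set Metric Real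

noncomputable def convMajorant (p s r : ℝ) : ℝ :=
  if r ≤ s then s ^ (-p) * r ^ (-p) else r ^ (-(2 * p))

lemma rpow_neg_mul_rpow_neg_le_convMajorant {p s x y : ℝ} (hp : 0 ≤ p) (hs : 0 < s)
    (hx : 0 ≤ x) (hy : 0 ≤ y) (hxy : 2 * s ≤ x + y) :
    x ^ (-p) * y ^ (-p) ≤ convMajorant p s x + convMajorant p s y := by
  have nonneg : ∀ r, 0 ≤ r → 0 ≤ convMajorant p s r := fun r hr => by
    unfold convMajorant; split_ifs <;> positivity
  have rpow_le : ∀ r, s ≤ r → r ^ (-p) ≤ s ^ (-p) := fun r hr =>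
    rpow_le_rpow_of_nonpos hs hr (by linarith)
  by_cases hxs : x ≤ s
  · calc x ^ (-p) * y ^ (-p) ≤ x ^ (-p) * s ^ (-p) :=
          mul_le_mul_of_nonneg_left (rpow_le y (by linarith)) (by positivity)
      _ = convMajorant p s x := by rw [convMajorant, if_pos hxs, mul_comm]
      _ ≤ convMajorant p s x + convMajorant p s y := le_add_of_nonneg_right (nonneg y hy)
  by_cases hys : y ≤ s
  · calc x ^ (-p) * y ^ (-p) ≤ s ^ (-p) * y ^ (-p) :=
          mul_le_mul_of_nonneg_right (rpow_le x (by linarith)) (by positivity)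
      _ = convMajorant p s y := by rw [convMajorant, if_pos hys]
      _ ≤ convMajorant p s x + convMajorant p s y := le_add_of_nonneg_left (nonneg x hx)
  rw [convMajorant, convMajorant, if_neg hxs, if_neg hys, show -(2 * p) = -p * 2 by ring,
    rpow_mul hx, rpow_mul hy, rpow_two, rpow_two]
  nlinarith [sq_nonneg (x ^ (-p) - y ^ (-p))]

lemma norm_mul_le_convMajorant {A : Type*} [SeminormedRing A] {u v : A}
    {Mu Mv p s x y : ℝ} (hp : 0 ≤ p) (hs : 0 < s) (hx : 0 < x) (hy : 0 < y)
    (hxy : 2 * s ≤ x + y) (hu : ‖u‖ ≤ Mu * exp (-x) * x ^ (-p))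
    (hv : ‖v‖ ≤ Mv * exp (-y) * y ^ (-p)) :
    ‖u * v‖ ≤ Mu * Mv * exp (-(2 * s)) * (convMajorant p s x + convMajorant p s y) := by
  have nonneg : ∀ {w : A} {M z : ℝ}, 0 < z → ‖w‖ ≤ M * exp (-z) * z ^ (-p) → 0 ≤ M := by
    intro w M z hz hw
    rw [mul_assoc] at hw
    exact nonneg_of_mul_nonneg_left ((norm_nonneg w).trans hw) (by positivity)
  have hMu := nonneg hx hu
  have hMv := nonneg hy hv
  calc ‖u * v‖ ≤ ‖u‖ * ‖v‖ := norm_mul_le u v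
    _ ≤ (Mu * exp (-x) * x ^ (-p)) * (Mv * exp (-y) * y ^ (-p)) :=
        mul_le_mul hu hv (norm_nonneg v) ((norm_nonneg u).trans hu)
    _ = Mu * Mv * exp (-(x + y)) * (x ^ (-p) * y ^ (-p)) := by rw [neg_add, exp_add]; ring
    _ ≤ Mu * Mv * exp (-(2 * s)) * (convMajorant p s x + convMajorant p s y) := by
        gcongr
        exact rpow_neg_mul_rpow_neg_le_convMajorant hp hs hx.le hy.le hxy

section Radial

variable {n p s : ℝ}

lemma eqOn_Ioc_rpow_mul_convMajorant :
    EqOn (fun r => r ^ (n - 1) * convMajorant p s r) (fun r => s ^ (-p) * r ^ (n - 1 - p))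
      (Ioc 0 s) := fun r ⟨hr, hrs⟩ => by
  simp only [convMajorant, if_pos hrs, sub_eq_add_neg (n - 1), rpow_add hr]
  ring

lemma eqOn_Ioi_rpow_mul_convMajorant (hs : 0 ≤ s) :
    EqOn (fun r => r ^ (n - 1) * convMajorant p s r) (fun r => r ^ (n - 1 - 2 * p))
      (Ioi s) := fun r (hr : s < r) => by
  simp only [convMajorant, if_neg hr.not_ge, sub_eq_add_neg (n - 1), rpow_add (hs.trans_lt hr)]

lemma integrableOn_rpow_mul_convMajorant (hs : 0 < s) (hpn : p < n) (hnp : n < 2 * p) :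
    IntegrableOn (fun r => r ^ (n - 1) * convMajorant p s r) (Ioi 0) := by
  rw [← Ioc_union_Ioi_eq_Ioi hs.le]
  refine IntegrableOn.union ?_ ?_
  · exact ((intervalIntegral.intervalIntegrable_rpow' (by linarith)).const_mul _).1.congr_fun
      eqOn_Ioc_rpow_mul_convMajorant.symm measurableSet_Ioc
  · exact (integrableOn_Ioi_rpow_of_lt (by linarith) hs).congr_fun
      (eqOn_Ioi_rpow_mul_convMajorant hs.le).symm measurableSet_Ioi

lemma integral_rpow_mul_convMajorant (hs : 0 < s) (hpn : p < n) (hnp : n < 2 * p) :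
    ∫ r in Ioi 0, r ^ (n - 1) * convMajorant p s r =
      (1 / (n - p) + 1 / (2 * p - n)) * s ^ (n - 2 * p) := by
  have hint := integrableOn_rpow_mul_convMajorant hs hpn hnp
  rw [← Ioc_union_Ioi_eq_Ioi hs.le, setIntegral_union Ioc_disjoint_Ioi_same measurableSet_Ioi
    (hint.mono_set Ioc_subset_Ioi_self) (hint.mono_set (Ioi_subset_Ioi hs.le)),
    setIntegral_congr_fun measurableSet_Ioc eqOn_Ioc_rpow_mul_convMajorant,
    setIntegral_congr_fun measurableSet_Ioi (eqOn_Ioi_rpow_mul_convMajorant hs.le),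
    integral_const_mul, ← intervalIntegral.integral_of_le hs.le,
    integral_rpow (Or.inl (by linarith)), integral_Ioi_rpow_of_lt (by linarith) hs]
  have hnp' : n - 1 - p + 1 = n - p := by ring
  have hn2p : n - 1 - 2 * p + 1 = n - 2 * p := by ring
  rw [hnp', hn2p, zero_rpow (by linarith), sub_zero, mul_div_assoc', ← rpow_add hs,
    show -p + (n - p) = n - 2 * p by ring]
  have h₁ : n - p ≠ 0 := by linarith
  have h₂ : n - 2 * p ≠ 0 := by linarith
  have h₃ : 2 * p - n ≠ 0 := by linarith
  field_simp
  ring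

end Radial

section Haar

open Module

variable {E : Type*} [NormedAddCommGroup E] [NormedSpace ℝ E] [FiniteDimensional ℝ E]
  [Nontrivial E]

lemma pow_finrank_pred_smul_eq_rpow_mul (f : ℝ → ℝ) :
    (fun r : ℝ => r ^ (finrank ℝ E - 1) • f r) = fun r => r ^ ((finrank ℝ E : ℝ) - 1) * f r := by
  ext r
  rw [smul_eq_mul, ← rpow_natCast, Nat.cast_pred finrank_pos]

variable [MeasurableSpace E] [BorelSpace E] (μ : Measure E) [μ.IsAddHaarMeasure] {p s : ℝ}

lemma integrable_convMajorant_norm (hs : 0 < s) (hpn : p < finrank ℝ E)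
    (hnp : finrank ℝ E < 2 * p) : Integrable (fun x => convMajorant p s ‖x‖) μ := by
  rw [integrable_fun_norm_addHaar μ, pow_finrank_pred_smul_eq_rpow_mul]
  exact integrableOn_rpow_mul_convMajorant hs hpn hnp

lemma integral_convMajorant_norm (hs : 0 < s) (hpn : p < finrank ℝ E)
    (hnp : finrank ℝ E < 2 * p) :
    ∫ x, convMajorant p s ‖x‖ ∂μ = finrank ℝ E * μ.real (ball 0 1) *
      ((1 / (finrank ℝ E - p) + 1 / (2 * p - finrank ℝ E)) * s ^ (finrank ℝ E - 2 * p)) := by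
  rw [integral_fun_norm_addHaar μ, pow_finrank_pred_smul_eq_rpow_mul,
    integral_rpow_mul_convMajorant hs hpn hnp, nsmul_eq_mul, smul_eq_mul, mul_assoc]

theorem norm_integral_mul_sub_le_of_exp_rpow_decay {A : Type*} [NormedRing A]
    [NormedSpace ℝ A] {p : ℝ} (hpn : p < finrank ℝ E) (hnp : finrank ℝ E < 2 * p) :
    ∃ C > 0, ∀ (f g : E → A) (Mf Mg : ℝ),
      (∀ ζ, ζ ≠ 0 → ‖f ζ‖ ≤ Mf * exp (-‖ζ‖) * ‖ζ‖ ^ (-p)) →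
      (∀ ζ, ζ ≠ 0 → ‖g ζ‖ ≤ Mg * exp (-‖ζ‖) * ‖ζ‖ ^ (-p)) →
      ∀ ξ, ξ ≠ 0 → ‖∫ η, f (ξ - η) * g η ∂μ‖ ≤
        C * Mf * Mg * exp (-‖ξ‖) * ‖ξ‖ ^ ((finrank ℝ E : ℝ) - 2 * p) := by
  set n : ℝ := (finrank ℝ E : ℝ)
  have hball : 0 < μ.real (ball 0 1) :=
    ENNReal.toReal_pos (measure_ball_pos μ 0 one_pos).ne' measure_ball_lt_top.ne
  have hp : 0 ≤ p := by linarith [(Nat.cast_nonneg _ : (0 : ℝ) ≤ n)]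
  refine ⟨2 * n * μ.real (ball 0 1) * (1 / (n - p) + 1 / (2 * p - n)) / 2 ^ (n - 2 * p), ?_, ?_⟩
  · have : 0 < n - p := by linarith
    have : 0 < 2 * p - n := by linarith
    have : 0 < n := by linarith
    positivity
  intro f g Mf Mg hf hg ξ hξ
  set s := ‖ξ‖ / 2
  have hs : 0 < s := by positivity
  have h2s : 2 * s = ‖ξ‖ := by ring
  have hbound : ∀ᵐ η ∂μ, ‖f (ξ - η) * g η‖ ≤
      Mf * Mg * exp (-‖ξ‖) * (convMajorant p s ‖ξ - η‖ + convMajorant p s ‖η‖) := by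
    filter_upwards [μ.ae_ne 0, μ.ae_ne ξ] with η hη0 hηξ
    rw [← h2s]
    refine norm_mul_le_convMajorant hp hs (norm_pos_iff.2 (sub_ne_zero.2 hηξ.symm))
      (norm_pos_iff.2 hη0) ?_ (hf _ (sub_ne_zero.2 hηξ.symm)) (hg η hη0)
    rw [h2s]
    simpa using norm_add_le (ξ - η) η
  have hG := integrable_convMajorant_norm μ hs hpn hnp
  calc ‖∫ η, f (ξ - η) * g η ∂μ‖
      ≤ ∫ η, Mf * Mg * exp (-‖ξ‖) * (convMajorant p s ‖ξ - η‖ + convMajorant p s ‖η‖) ∂μ :=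
        norm_integral_le_of_norm_le (((hG.comp_sub_left ξ).add hG).const_mul _) hbound
    _ = Mf * Mg * exp (-‖ξ‖) * (2 * ∫ η, convMajorant p s ‖η‖ ∂μ) := by
        rw [integral_const_mul, integral_add (hG.comp_sub_left ξ) hG,
          integral_sub_left_eq_self (fun η => convMajorant p s ‖η‖) μ ξ, two_mul]
    _ = _ := by
        rw [integral_convMajorant_norm μ hs hpn hnp, div_rpow (norm_nonneg ξ) zero_le_two]
        ring

end Haar

/-- If `|Û(ξ)| ≤ M_U e^{−|ξ|}|ξ|^{−2}` and `|V̂(ξ)| ≤ M_V e^{−|ξ|}|ξ|^{−2}`, then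
`|(Û ∗ V̂)(ξ)| ≤ c M_U M_V e^{−|ξ|} / |ξ|` for an absolute constant `c`. -/
theorem convolution_pm2_estimate :
    ∃ c > 0, ∀ (hatU hatV : EuclideanSpace ℝ (Fin 3) → ℂ) (MU MV : ℝ),
      (∀ ξ : EuclideanSpace ℝ (Fin 3), ξ ≠ 0 →
        ‖hatU ξ‖ ≤ MU * Real.exp (-‖ξ‖) * ‖ξ‖ ^ (-2 : ℝ)) →
      (∀ ξ : EuclideanSpace ℝ (Fin 3), ξ ≠ 0 →
        ‖hatV ξ‖ ≤ MV * Real.exp (-‖ξ‖) * ‖ξ‖ ^ (-2 : ℝ)) →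
      ∀ ξ : EuclideanSpace ℝ (Fin 3), ξ ≠ 0 →
        ‖∫ η, hatU (ξ - η) * hatV η‖ ≤ c * MU * MV * Real.exp (-‖ξ‖) / ‖ξ‖ := by
  have hdim : (Module.finrank ℝ (EuclideanSpace ℝ (Fin 3)) : ℝ) = 3 := by simp
  obtain ⟨c, hc, hconv⟩ := norm_integral_mul_sub_le_of_exp_rpow_decay
    (volume : Measure (EuclideanSpace ℝ (Fin 3))) (A := ℂ) (p := 2)
    (by rw [hdim]; norm_num) (by rw [hdim]; norm_num)
  refine ⟨c, hc, fun hatU hatV MU MV hU hV ξ hξ => ?_⟩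
  have := hconv hatU hatV MU MV hU hV ξ hξ
  rwa [hdim, show (3 : ℝ) - 2 * 2 = -1 by norm_num, rpow_neg_one, ← div_eq_mul_inv] at this
end

section
/- Let A = { U ∈ PM² : e^{√(−Δ)} U ∈ PM² } with norm ‖U‖_A = ‖e^{√(−Δ)} U‖_{PM²} = sup_{ξ≠0} |ξ|² e^{|ξ|} |Û(ξ)|. For divergence-free U, V ∈ A, the bilinear form B(U,V) = (1/ν) P (Δ^{−1} div(U ⊗ V)) satisfies ‖B(U,V)‖_A ≤ (c/ν) ‖U‖_A ‖V‖_A for an absolute constant c > 0. -/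
open MeasureTheory

noncomputable section

/-- Convolution of two scalar functions on `ℝ³`. -/
def convC (f g : EuclideanSpace ℝ (Fin 3) → ℂ) (ξ : EuclideanSpace ℝ (Fin 3)) : ℂ :=
  ∫ η, f (ξ - η) * g η

/-- Fourier symbol of `div(U ⊗ V)`: the `j`-th component is `i Σ_k ξ_k (Û_j ∗ V̂_k)(ξ)`. -/
def divTensorFourier (hatU hatV : EuclideanSpace ℝ (Fin 3) → EuclideanSpace ℂ (Fin 3))
    (ξ : EuclideanSpace ℝ (Fin 3)) (j : Fin 3) : ℂ :=
  Complex.I * ∑ k : Fin 3, (ξ k : ℂ) * convC (fun ζ => hatU ζ j) (fun ζ => hatV ζ k) ξ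

/-- Fourier symbol of the Leray projector `P`: `(Pv)^(ξ)_j = v̂_j − ξ_j (ξ·v̂)/|ξ|²`. -/
def lerayFourier (v : EuclideanSpace ℝ (Fin 3) → Fin 3 → ℂ)
    (ξ : EuclideanSpace ℝ (Fin 3)) (j : Fin 3) : ℂ :=
  v ξ j - ((ξ j : ℂ) / ((‖ξ‖ ^ 2 : ℝ) : ℂ)) * ∑ k : Fin 3, (ξ k : ℂ) * v ξ k

/-!
On the Fourier side `‖U‖_A ≤ N` says `|Û(ζ)| ≤ N |ζ|⁻² e^{-|ζ|}`. Since
`e^{-|ξ-η|} e^{-|η|} ≤ e^{-|ξ|}`, each convolution `Û_j ∗ V̂_k` is then bounded by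
`N_U N_V e^{-|ξ|} K(ξ)` with `K(ξ) = ∫ |ξ-η|⁻² |η|⁻² dη`. In `ℝ³` this integral converges (the
two singularities are of order `2 < 3`, the tail decays like `|η|⁻⁴`), and by rotation and
scaling invariance `K(ξ) = K(e)/|ξ|` for a unit vector `e`. The derivative in `div` costs a factor
`|ξ|`, the Leray projector a bounded factor, and `Δ⁻¹` returns `|ξ|⁻²`, so the product is again
bounded by a multiple of `|ξ|⁻² e^{-|ξ|}`.
-/

open Module

theorem MeasureTheory.LocallyIntegrable.comp_sub_left {G F : Type*} [NormedAddCommGroup G]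
    [MeasurableSpace G] [BorelSpace G] [NormedAddCommGroup F] {μ : Measure G}
    [μ.IsAddLeftInvariant] [μ.IsNegInvariant] {g : G → F} (hg : LocallyIntegrable g μ) (a : G) :
    LocallyIntegrable (fun x => g (a - x)) μ := by
  intro x
  obtain ⟨s, hs, hint⟩ := hg (a - x)
  refine ⟨(a - ·) ⁻¹' s, (continuous_const.sub continuous_id).continuousAt hs, ?_⟩
  exact ((μ.measurePreserving_sub_left a).integrableOn_comp_preimage
    (Homeomorph.subLeft a).measurableEmbedding).2 hint

theorem inv_sq_mul_inv_sq_le {a b s : ℝ} (hs : 0 < s) (h : s ≤ a + b) :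
    (a ^ 2)⁻¹ * (b ^ 2)⁻¹ ≤ 4 / s ^ 2 * ((a ^ 2)⁻¹ + (b ^ 2)⁻¹) := by
  have key : ∀ x y : ℝ, s / 2 ≤ y → (x ^ 2)⁻¹ * (y ^ 2)⁻¹ ≤ 4 / s ^ 2 * (x ^ 2)⁻¹ := by
    intro x y hy
    rw [mul_comm (4 / s ^ 2)]
    gcongr
    calc (y ^ 2)⁻¹ ≤ ((s / 2) ^ 2)⁻¹ := by gcongr
      _ = 4 / s ^ 2 := by field_simp; norm_num
  have ha := inv_nonneg.2 (sq_nonneg a)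
  have hb := inv_nonneg.2 (sq_nonneg b)
  rcases le_total (s / 2) b with hsb | hsb
  · exact (key a b hsb).trans (by gcongr; linarith)
  · rw [mul_comm]
    exact (key b a (by linarith)).trans (by gcongr; linarith)

section InvNormSq

variable {E : Type*} [NormedAddCommGroup E]

def invNormSq (x : E) : ℝ := (‖x‖ ^ 2)⁻¹

theorem invNormSq_nonneg (x : E) : 0 ≤ invNormSq x := by
  unfold invNormSq; positivity

theorem invNormSq_pos {x : E} (hx : x ≠ 0) : 0 < invNormSq x := by
  have := norm_pos_iff.2 hx
  unfold invNormSq; positivity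

theorem invNormSq_le_of_le {x : E} {t : ℝ} (ht : 0 < t) (h : t ≤ ‖x‖) :
    invNormSq x ≤ (t ^ 2)⁻¹ := by
  unfold invNormSq; gcongr

theorem invNormSq_eq_rpow (x : E) : invNormSq x = ‖x‖ ^ (-2 : ℝ) := by
  rw [invNormSq, Real.rpow_neg (norm_nonneg x), Real.rpow_two]

theorem measurable_invNormSq [MeasurableSpace E] [OpensMeasurableSpace E] :
    Measurable (invNormSq : E → ℝ) := by
  unfold invNormSq; fun_prop

theorem le_mul_exp_neg_norm_mul_invNormSq {ζ : E} (hζ : ζ ≠ 0)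
    {a N : ℝ} (h : ‖ζ‖ ^ 2 * Real.exp ‖ζ‖ * a ≤ N) :
    a ≤ N * Real.exp (-‖ζ‖) * invNormSq ζ := by
  have := norm_pos_iff.2 hζ
  rw [invNormSq, Real.exp_neg, ← div_eq_mul_inv, ← div_eq_mul_inv, div_div,
    le_div_iff₀ (by positivity)]
  linarith

theorem norm_apply_sub_mul_apply_le {R : Type*} [NormedRing R]
    {f g : E → R} {Nf Ng : ℝ}
    (hf : ∀ ζ, ζ ≠ 0 → ‖ζ‖ ^ 2 * Real.exp ‖ζ‖ * ‖f ζ‖ ≤ Nf)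
    (hg : ∀ ζ, ζ ≠ 0 → ‖ζ‖ ^ 2 * Real.exp ‖ζ‖ * ‖g ζ‖ ≤ Ng) {ξ η : E} (hη : η ≠ 0) (hηξ : η ≠ ξ) :
    ‖f (ξ - η) * g η‖ ≤ Nf * Ng * Real.exp (-‖ξ‖) * (invNormSq (ξ - η) * invNormSq η) := by
  have hξη : ξ - η ≠ 0 := sub_ne_zero.2 hηξ.symm
  have hNf : 0 ≤ Nf := le_trans (by positivity) (hf _ hξη)
  have hNg : 0 ≤ Ng := le_trans (by positivity) (hg _ hη)
  have hexp : Real.exp (-‖ξ - η‖) * Real.exp (-‖η‖) ≤ Real.exp (-‖ξ‖) := by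
    rw [← Real.exp_add, Real.exp_le_exp]
    linarith [norm_sub_norm_le ξ η]
  calc ‖f (ξ - η) * g η‖ ≤ ‖f (ξ - η)‖ * ‖g η‖ := norm_mul_le _ _
    _ ≤ (Nf * Real.exp (-‖ξ - η‖) * invNormSq (ξ - η)) * (Ng * Real.exp (-‖η‖) * invNormSq η) :=
        mul_le_mul (le_mul_exp_neg_norm_mul_invNormSq hξη (hf _ hξη))
          (le_mul_exp_neg_norm_mul_invNormSq hη (hg _ hη)) (norm_nonneg _)
          (by have := invNormSq_nonneg (ξ - η); positivity)
    _ = Nf * Ng * (Real.exp (-‖ξ - η‖) * Real.exp (-‖η‖)) *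
          (invNormSq (ξ - η) * invNormSq η) := by ring
    _ ≤ Nf * Ng * Real.exp (-‖ξ‖) * (invNormSq (ξ - η) * invNormSq η) := by
        have := invNormSq_nonneg (ξ - η)
        have := invNormSq_nonneg η
        gcongr

theorem invNormSq_sub_mul_invNormSq_le_rpow {ξ η : E} (h : 2 * ‖ξ‖ + 1 ≤ ‖η‖) :
    invNormSq (ξ - η) * invNormSq η ≤ 16 * (1 + ‖η‖) ^ (-4 : ℝ) := by
  have := norm_nonneg ξ
  have ht : 0 < (1 + ‖η‖) / 2 := by positivity
  have hsub : (1 + ‖η‖) / 2 ≤ ‖ξ - η‖ := by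
    have := norm_sub_norm_le η ξ
    rw [norm_sub_rev] at this
    linarith
  calc invNormSq (ξ - η) * invNormSq η
      ≤ (((1 + ‖η‖) / 2) ^ 2)⁻¹ * (((1 + ‖η‖) / 2) ^ 2)⁻¹ :=
        mul_le_mul (invNormSq_le_of_le ht hsub) (invNormSq_le_of_le ht (by linarith))
          (invNormSq_nonneg η) (by positivity)
    _ = 16 * (1 + ‖η‖) ^ (-4 : ℝ) := by
        rw [Real.rpow_neg (by positivity)]
        norm_cast
        field_simp
        norm_num

theorem invNormSq_smul [NormedSpace ℝ E] (r : ℝ) (x : E) :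
    invNormSq (r • x) = (r ^ 2)⁻¹ * invNormSq x := by
  simp only [invNormSq, norm_smul, mul_pow, Real.norm_eq_abs, sq_abs, mul_inv]

theorem LinearIsometryEquiv.invNormSq_apply [NormedSpace ℝ E] (A : E ≃ₗᵢ[ℝ] E) (x : E) :
    invNormSq (A x) = invNormSq x := by
  simp only [invNormSq, LinearIsometryEquiv.norm_map]

theorem locallyIntegrable_invNormSq [NormedSpace ℝ E] [FiniteDimensional ℝ E]
    [MeasurableSpace E] [BorelSpace E] {μ : Measure E} [μ.IsAddHaarMeasure]
    (hE : 2 < finrank ℝ E) : LocallyIntegrable invNormSq μ := by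
  refine locallyIntegrable_of_norm_le_rpow (C := 1) (α := 2) (by omega) (by exact_mod_cast hE)
    (ae_of_all _ fun x => ?_) measurable_invNormSq.aestronglyMeasurable
  rw [Real.norm_of_nonneg (invNormSq_nonneg x), one_mul, invNormSq_eq_rpow]

end InvNormSq

section InvNormSqConv

variable {E : Type*} [NormedAddCommGroup E] [InnerProductSpace ℝ E] [FiniteDimensional ℝ E]
  [MeasurableSpace E] [BorelSpace E]

def invNormSqConv (ξ : E) : ℝ := ∫ η, invNormSq (ξ - η) * invNormSq η

theorem invNormSqConv_eq_of_norm_eq {u v : E} (h : ‖u‖ = ‖v‖) :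
    invNormSqConv u = invNormSqConv v := by
  set A := Submodule.reflection (ℝ ∙ (u - v))ᗮ
  have hA : A u = v := Submodule.reflection_sub h
  calc invNormSqConv u = ∫ η, invNormSq (v - A η) * invNormSq (A η) := by
        simp only [invNormSqConv, ← hA, ← map_sub, LinearIsometryEquiv.invNormSq_apply]
    _ = invNormSqConv v := A.measurePreserving.integral_comp' (f := A.toMeasurableEquiv)
          fun η => invNormSq (v - η) * invNormSq η

theorem invNormSqConv_smul {r : ℝ} (hr : r ≠ 0) (ξ : E) :
    invNormSqConv (r • ξ) = |r| ^ finrank ℝ E / r ^ 4 * invNormSqConv ξ := by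
  have hscale : ∀ η : E, invNormSq (r • ξ - r • η) * invNormSq (r • η) =
      (r ^ 4)⁻¹ * (invNormSq (ξ - η) * invNormSq η) := by
    intro η
    rw [← smul_sub, invNormSq_smul, invNormSq_smul]
    ring
  have h := Measure.integral_comp_smul volume (fun η => invNormSq (r • ξ - η) * invNormSq η) r
  simp only [hscale, integral_const_mul, smul_eq_mul, abs_inv, abs_pow] at h
  rw [invNormSqConv, invNormSqConv]
  field_simp at h ⊢
  linarith

theorem invNormSqConv_eq_div_norm (hE : finrank ℝ E = 3) {e ξ : E} (he : ‖e‖ = 1) (hξ : ξ ≠ 0) :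
    invNormSqConv ξ = invNormSqConv e / ‖ξ‖ := by
  have hnorm : ‖ξ‖ = ‖‖ξ‖ • e‖ := by rw [norm_smul, he, norm_norm, mul_one]
  have hξ' : ‖ξ‖ ≠ 0 := norm_ne_zero_iff.2 hξ
  rw [invNormSqConv_eq_of_norm_eq hnorm, invNormSqConv_smul hξ', hE, abs_norm]
  field_simp

theorem integrable_invNormSq_sub_mul_invNormSq (hE : finrank ℝ E = 3) {ξ : E} (hξ : ξ ≠ 0) :
    Integrable (fun η => invNormSq (ξ - η) * invNormSq η) := by
  have hloc : LocallyIntegrable (invNormSq : E → ℝ) := locallyIntegrable_invNormSq (by omega)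
  refine LocallyIntegrable.integrable_of_isBigO_cocompact ?_ ?_
    ((integrable_one_add_norm (r := 4) (by rw [hE]; norm_num)).integrableAtFilter _)
  · refine (((hloc.comp_sub_left ξ).add hloc).smul (4 / ‖ξ‖ ^ 2)).mono
      ((measurable_invNormSq.comp (measurable_const.sub measurable_id)).mul
        measurable_invNormSq).aestronglyMeasurable (ae_of_all _ fun η => ?_)
    have htri : ‖ξ‖ ≤ ‖ξ - η‖ + ‖η‖ := by simpa using norm_add_le (ξ - η) η
    have hsum := add_nonneg (invNormSq_nonneg (ξ - η)) (invNormSq_nonneg η)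
    simp only [Pi.smul_apply, Pi.add_apply, smul_eq_mul]
    rw [Real.norm_of_nonneg (mul_nonneg (invNormSq_nonneg _) (invNormSq_nonneg _)),
      Real.norm_of_nonneg (by positivity)]
    exact inv_sq_mul_inv_sq_le (norm_pos_iff.2 hξ) htri
  · refine Asymptotics.IsBigO.of_bound 16 ?_
    filter_upwards [tendsto_norm_cocompact_atTop.eventually_ge_atTop (2 * ‖ξ‖ + 1)] with η hη
    rw [Real.norm_of_nonneg (mul_nonneg (invNormSq_nonneg _) (invNormSq_nonneg _)),
      Real.norm_of_nonneg (by positivity)]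
    exact invNormSq_sub_mul_invNormSq_le_rpow hη

theorem invNormSqConv_pos (hE : finrank ℝ E = 3) {ξ : E} (hξ : ξ ≠ 0) : 0 < invNormSqConv ξ := by
  refine (integral_pos_iff_support_of_nonneg
    (fun η => mul_nonneg (invNormSq_nonneg _) (invNormSq_nonneg _))
    (integrable_invNormSq_sub_mul_invNormSq hE hξ)).2 ?_
  have hopen : IsOpen ({ξ}ᶜ ∩ {0}ᶜ : Set E) := isOpen_compl_singleton.inter isOpen_compl_singleton
  refine (hopen.measure_pos volume ⟨-ξ, ?_, ?_⟩).trans_le (measure_mono fun η hη => ?_)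
  · simpa [neg_eq_iff_add_eq_zero, ← two_smul ℝ ξ] using hξ
  · simpa using hξ
  · exact (mul_pos (invNormSq_pos (sub_ne_zero.2 (Ne.symm hη.1))) (invNormSq_pos hη.2)).ne'

end InvNormSqConv

theorem sq_mul_exp_mul_norm_apply_le {E ι : Type*} [NormedAddCommGroup E] [Fintype ι]
    {W : E → EuclideanSpace ℂ ι} {N : ℝ}
    (hW : ∀ ζ, ζ ≠ 0 → ‖ζ‖ ^ 2 * Real.exp ‖ζ‖ * ‖W ζ‖ ≤ N) (a : ι) :
    ∀ ζ, ζ ≠ 0 → ‖ζ‖ ^ 2 * Real.exp ‖ζ‖ * ‖W ζ a‖ ≤ N := fun ζ hζ =>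
  (mul_le_mul_of_nonneg_left (PiLp.norm_apply_le (W ζ) a) (by positivity)).trans (hW ζ hζ)

local notation "ℝ³" => EuclideanSpace ℝ (Fin 3)

theorem norm_convC_le {f g : ℝ³ → ℂ} {Nf Ng : ℝ}
    (hf : ∀ ζ, ζ ≠ 0 → ‖ζ‖ ^ 2 * Real.exp ‖ζ‖ * ‖f ζ‖ ≤ Nf)
    (hg : ∀ ζ, ζ ≠ 0 → ‖ζ‖ ^ 2 * Real.exp ‖ζ‖ * ‖g ζ‖ ≤ Ng) {ξ : ℝ³} (hξ : ξ ≠ 0) :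
    ‖convC f g ξ‖ ≤ Nf * Ng * Real.exp (-‖ξ‖) * invNormSqConv ξ := by
  have hE : finrank ℝ ℝ³ = 3 := finrank_euclideanSpace_fin
  rw [convC, invNormSqConv, ← integral_const_mul]
  refine norm_integral_le_of_norm_le
    ((integrable_invNormSq_sub_mul_invNormSq hE hξ).const_mul _) ?_
  filter_upwards [volume.ae_ne 0, volume.ae_ne ξ] with η hη hηξ
  exact norm_apply_sub_mul_apply_le hf hg hη hηξ

theorem norm_sum_coord_mul_le {n : ℕ} (ξ : EuclideanSpace ℝ (Fin n)) {a : Fin n → ℂ} {B : ℝ}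
    (h : ∀ k, ‖a k‖ ≤ B) : ‖∑ k, (ξ k : ℂ) * a k‖ ≤ n * (‖ξ‖ * B) := by
  calc ‖∑ k, (ξ k : ℂ) * a k‖ ≤ ∑ k, ‖(ξ k : ℂ) * a k‖ := norm_sum_le _ _
    _ ≤ ∑ _k : Fin n, ‖ξ‖ * B := by
        refine Finset.sum_le_sum fun k _ => ?_
        rw [norm_mul, Complex.norm_real]
        exact mul_le_mul (PiLp.norm_apply_le ξ k) (h k) (norm_nonneg _) (norm_nonneg _)
    _ = n * (‖ξ‖ * B) := by simp

theorem norm_divTensorFourier_le {U V : ℝ³ → EuclideanSpace ℂ (Fin 3)} {ξ : ℝ³} {B : ℝ}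
    (h : ∀ j k, ‖convC (fun ζ => U ζ j) (fun ζ => V ζ k) ξ‖ ≤ B) (j : Fin 3) :
    ‖divTensorFourier U V ξ j‖ ≤ 3 * (‖ξ‖ * B) := by
  rw [divTensorFourier, norm_mul, Complex.norm_I, one_mul]
  exact_mod_cast norm_sum_coord_mul_le ξ (h j)

theorem norm_lerayFourier_le {v : ℝ³ → Fin 3 → ℂ} {ξ : ℝ³} {B : ℝ} (h : ∀ k, ‖v ξ k‖ ≤ B)
    (j : Fin 3) : ‖lerayFourier v ξ j‖ ≤ 4 * B := by
  have hB : 0 ≤ B := (norm_nonneg _).trans (h 0)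
  have hsum := norm_sum_coord_mul_le ξ h
  have hproj : ‖(ξ j : ℂ) / ((‖ξ‖ ^ 2 : ℝ) : ℂ)‖ * ‖∑ k, (ξ k : ℂ) * v ξ k‖ ≤ 3 * B := by
    rcases eq_or_ne ξ 0 with rfl | hξ
    · simp [hB]
    have := norm_pos_iff.2 hξ
    rw [norm_div, Complex.norm_real, Complex.norm_real, norm_pow, norm_norm]
    calc ‖ξ j‖ / ‖ξ‖ ^ 2 * ‖∑ k, (ξ k : ℂ) * v ξ k‖ ≤ ‖ξ‖ / ‖ξ‖ ^ 2 * (3 * (‖ξ‖ * B)) := by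
          gcongr
          · exact PiLp.norm_apply_le ξ j
          · exact_mod_cast hsum
      _ = 3 * B := by field_simp
  calc ‖lerayFourier v ξ j‖
      ≤ ‖v ξ j‖ + ‖(ξ j : ℂ) / ((‖ξ‖ ^ 2 : ℝ) : ℂ)‖ * ‖∑ k, (ξ k : ℂ) * v ξ k‖ := by
        rw [lerayFourier, ← norm_mul]
        exact norm_sub_le _ _
    _ ≤ 4 * B := by linarith [h j]

/-- Bilinear estimate in `A = {U ∈ PM² : e^{√−Δ}U ∈ PM²}`: for divergence-free `U, V ∈ A`,
`‖(1/ν) P Δ^{−1} div(U⊗V)‖_A ≤ (c/ν) ‖U‖_A ‖V‖_A`, stated on the Fourier side. -/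
theorem bilinear_estimate_A :
    ∃ c > 0, ∀ (ν : ℝ), 0 < ν →
      ∀ (hatU hatV : EuclideanSpace ℝ (Fin 3) → EuclideanSpace ℂ (Fin 3)) (NU NV : ℝ),
      (∀ ξ : EuclideanSpace ℝ (Fin 3), ∑ k : Fin 3, (ξ k : ℂ) * hatU ξ k = 0) →
      (∀ ξ : EuclideanSpace ℝ (Fin 3), ∑ k : Fin 3, (ξ k : ℂ) * hatV ξ k = 0) →
      (∀ ξ : EuclideanSpace ℝ (Fin 3), ξ ≠ 0 →
        ‖ξ‖ ^ 2 * Real.exp ‖ξ‖ * ‖hatU ξ‖ ≤ NU) →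
      (∀ ξ : EuclideanSpace ℝ (Fin 3), ξ ≠ 0 →
        ‖ξ‖ ^ 2 * Real.exp ‖ξ‖ * ‖hatV ξ‖ ≤ NV) →
      ∀ ξ : EuclideanSpace ℝ (Fin 3), ξ ≠ 0 → ∀ j : Fin 3,
        ‖ξ‖ ^ 2 * Real.exp ‖ξ‖ *
          ‖((ν⁻¹ : ℝ) : ℂ) * ((-(‖ξ‖ ^ 2)⁻¹ : ℝ) : ℂ) *
            lerayFourier (divTensorFourier hatU hatV) ξ j‖ ≤ (c / ν) * NU * NV := by
  set e : ℝ³ := EuclideanSpace.single 0 1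
  have he : ‖e‖ = 1 := by simp [e]
  have hE : finrank ℝ ℝ³ = 3 := finrank_euclideanSpace_fin
  have he0 : e ≠ 0 := norm_ne_zero_iff.1 (by simp [he])
  refine ⟨12 * invNormSqConv e, mul_pos (by norm_num) (invNormSqConv_pos hE he0), ?_⟩
  intro ν hν hatU hatV NU NV _ _ hU hV ξ hξ j
  have hconv : ∀ a b : Fin 3, ‖convC (fun ζ => hatU ζ a) (fun ζ => hatV ζ b) ξ‖ ≤
      NU * NV * Real.exp (-‖ξ‖) * (invNormSqConv e / ‖ξ‖) := fun a b =>
    invNormSqConv_eq_div_norm hE he hξ ▸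
      norm_convC_le (sq_mul_exp_mul_norm_apply_le hU a) (sq_mul_exp_mul_norm_apply_le hV b) hξ
  have hleray := norm_lerayFourier_le (norm_divTensorFourier_le hconv) j
  have := norm_pos_iff.2 hξ
  calc ‖ξ‖ ^ 2 * Real.exp ‖ξ‖ * ‖((ν⁻¹ : ℝ) : ℂ) * ((-(‖ξ‖ ^ 2)⁻¹ : ℝ) : ℂ) *
        lerayFourier (divTensorFourier hatU hatV) ξ j‖
      = Real.exp ‖ξ‖ / ν * ‖lerayFourier (divTensorFourier hatU hatV) ξ j‖ := by
        rw [norm_mul, norm_mul, Complex.norm_real, Complex.norm_real, norm_neg, norm_inv, norm_inv,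
          Real.norm_of_nonneg hν.le, norm_pow, norm_norm]
        field_simp
    _ ≤ Real.exp ‖ξ‖ / ν * (4 * (3 * (‖ξ‖ * (NU * NV * Real.exp (-‖ξ‖) *
          (invNormSqConv e / ‖ξ‖))))) := by gcongr
    _ = 12 * invNormSqConv e / ν * NU * NV := by
        rw [Real.exp_neg]
        field_simp
        ring
end
end
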